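/- Let p ≥ 1, c ≥ 1 be integers and b = pc + 1. Then for every σ ∈ G_{p,n}, the probability that the (b,n,p)-shuffle equals σ is b^{−n} · binom(n + c − d(σ^{−1}), n). -/

import Mathlib

open scoped Classical

noncomputable section

/-- The colored permutation group `G_{p,n}`: an element is determined by its permutation
part `σ(·)` and its colors `σ_c(·)`. -/
def GPN (p n : ℕ) : Type := Equiv.Perm (Fin n) × (Fin n → ZMod p)

namespace GPN

variable {p n : ℕ}

/-- Group law coming from composition of the corresponding bijections of
`{1,…,n} × Z_p`: `(μτ)(i) = μ(τ(i))` and `(μτ)_c(i) = μ_c(τ(i)) + τ_c(i)`. -/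
instance : Group (GPN p n) where
  mul a b := (a.1 * b.1, fun i => a.2 (b.1 i) + b.2 i)
  one := (1, fun _ => 0)
  inv a := (a.1⁻¹, fun i => -a.2 (a.1⁻¹ i))
  mul_assoc a b c := Prod.ext (mul_assoc _ _ _) (funext fun i => add_assoc _ _ _)
  one_mul a := Prod.ext (one_mul _) (funext fun i => zero_add _)
  mul_one a := Prod.ext (mul_one _) (funext fun i => add_zero _)
  inv_mul_cancel a := Prod.ext (inv_mul_cancel _)
    (funext fun i => by
      show -a.2 (a.1⁻¹ (a.1 i)) + a.2 i = 0
      rw [← Equiv.Perm.mul_apply, inv_mul_cancel, Equiv.Perm.one_apply]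
      exact neg_add_cancel _)

instance [NeZero p] : Fintype (GPN p n) := by unfold GPN; infer_instance

instance : DecidableEq (GPN p n) := by unfold GPN; infer_instance

end GPN

/-- Rank of a color `r ∈ Z_p` in the order `0, p-1, p-2, …, 1` used to define
the linear order on `Σ = {1,…,n} × Z_p`. -/
def rho (p : ℕ) (r : ZMod p) : ℕ := if r = 0 then 0 else p - r.val

/-- The linear order on `Σ`: `(i,r) < (j,s)` iff the color of `r` comes strictly earlier
(in the order `0, p-1, …, 1`), or the colors agree and `i < j`. -/
def sigmaLt (p : ℕ) (x y : ℕ × ZMod p) : Prop :=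
  rho p x.2 < rho p y.2 ∨ (rho p x.2 = rho p y.2 ∧ x.1 < y.1)

/-- The pair `(σ(i), σ_c(i)) ∈ {1,…,n} × Z_p`. -/
def gpnPair {p n : ℕ} (σ : GPN p n) (i : Fin n) : ℕ × ZMod p :=
  ((σ.1 i : ℕ) + 1, σ.2 i)

/-- `σ ∈ G_{p,n}` has a d-descent at position `i+1` (positions are `1,…,n`):
for positions `< n` this means `(σ(i),σ_c(i)) > (σ(i+1),σ_c(i+1))`,
and at position `n` it means `σ_c(n) ≠ 0`. -/
def gpnHasDDescentAt {p n : ℕ} (σ : GPN p n) (i : Fin n) : Prop :=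
  if h : (i : ℕ) + 1 < n then
    sigmaLt p (gpnPair σ ⟨(i : ℕ) + 1, h⟩) (gpnPair σ i)
  else σ.2 i ≠ 0

/-- `d(σ)`, the number of d-descents of `σ ∈ G_{p,n}`. -/
def dNum {p n : ℕ} (σ : GPN p n) : ℕ :=
  (Finset.univ.filter fun i : Fin n => gpnHasDDescentAt σ i).card

/-- The position part of the `(b,n,p)`-shuffle determined by labels `A`:
`σ(i) = #{j : A j < A i, or A j = A i and j ≤ i}` (a position in `{1,…,n}`). -/
def shufflePos {n b : ℕ} (A : Fin n → Fin b) (i : Fin n) : ℕ :=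
  (Finset.univ.filter fun j : Fin n => A j < A i ∨ (A j = A i ∧ j ≤ i)).card

/-- The color part of the `(b,n,p)`-shuffle determined by labels `A`: `σ_c(i) = A i mod p`. -/
def shuffleCol (p : ℕ) {n b : ℕ} (A : Fin n → Fin b) (i : Fin n) : ZMod p :=
  ((A i : ℕ) : ZMod p)

/-- The labels `A` produce the element `σ ∈ G_{p,n}` under the `(b,n,p)`-shuffle. -/
def shuffleEq (p : ℕ) {n b : ℕ} (A : Fin n → Fin b) (σ : GPN p n) : Prop :=
  (∀ i, shufflePos A i = (σ.1 i : ℕ) + 1) ∧ (∀ i, shuffleCol p A i = σ.2 i)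

/-- The probability that the `(b,n,p)`-shuffle equals `σ ∈ G_{p,n}`. -/
def shuffleProb (p : ℕ) (n b : ℕ) (σ : GPN p n) : ℝ :=
  ((Finset.univ.filter fun A : Fin n → Fin b => shuffleEq p A σ).card : ℝ) / (b : ℝ) ^ n

/-!
List the letters `i` by their position `k = σ(i)` under the shuffle. The labels `A` produce `σ`
exactly when each label has the prescribed colour as residue mod `p` and the keys `(A i, i)`
increase lexicographically along the positions. Write the label of the letter at position `k` as
`p q_k + s_k` with `s_k < p`. The order on `Σ` is set up so that `s_k` is the rank of the colour
of `σ⁻¹` at `k`, so the lexicographic increase from `k` to `k + 1` says `q_k ≤ q_{k+1}`, strictly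
exactly when `σ⁻¹` has a d-descent at `k`; likewise the bound `A < pc + 1` at the last position
says `q_n ≤ c`, strictly exactly when `σ⁻¹` has a d-descent at `n`. Subtracting from `q_k` the
number of d-descents before `k` turns these sequences into the weakly increasing sequences with
values at most `c - d(σ⁻¹)`, of which there are `binom(n + c - d(σ⁻¹), n)`.
-/

open Finset

theorem Nat.card_fin_orderEmbedding_fin (k N : ℕ) : Nat.card (Fin k ↪o Fin N) = N.choose k := by
  rw [Nat.card_congr Set.powersetCard.ofFinEmbEquiv, Set.powersetCard.card,
    Nat.card_eq_fintype_card, Fintype.card_fin]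

theorem Fin.val_le_of_strictMono {n : ℕ} {e : Fin (n + 1) → ℕ} (he : StrictMono e)
    (k : Fin (n + 1)) : (k : ℕ) ≤ e k := by
  induction k using Fin.induction with
  | zero => exact Nat.zero_le _
  | succ i ih =>
    have := he i.castSucc_lt_succ
    simp only [Fin.val_succ, Fin.val_castSucc] at ih ⊢
    omega

def monotoneEquivOrderEmbedding (n M : ℕ) :
    {m : Fin (n + 1) → ℕ // Monotone m ∧ ∀ k, m k ≤ M} ≃ (Fin (n + 1) ↪o Fin (n + 1 + M)) where
  toFun m := OrderEmbedding.ofStrictMono (fun k => ⟨m.1 k + k, by have := m.2.2 k; omega⟩)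
    fun a b hab => Fin.mk_lt_mk.2 (Nat.add_lt_add_of_le_of_lt (m.2.1 hab.le) hab)
  invFun e := ⟨fun k => e k - k, by
    have hle := Fin.val_le_of_strictMono (Fin.val_strictMono.comp e.strictMono)
    have hmono : Monotone fun k : Fin (n + 1) => (e k : ℕ) - k := by
      rw [Fin.monotone_iff_le_succ]
      intro i
      have h1 := e.strictMono i.castSucc_lt_succ
      have h2 := hle i.castSucc
      rw [Fin.lt_def] at h1
      simp only [Function.comp_apply, Fin.val_succ, Fin.val_castSucc] at h1 h2 ⊢
      omega
    refine ⟨hmono, fun k => ?_⟩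
    have h1 := hmono (Fin.le_last k)
    have h2 := (e (Fin.last n)).isLt
    simp only [Fin.val_last] at h1 ⊢
    omega⟩
  left_inv m := Subtype.ext <| funext fun k => Nat.add_sub_cancel _ _
  right_inv e := by
    ext k
    exact Nat.sub_add_cancel (Fin.val_le_of_strictMono (Fin.val_strictMono.comp e.strictMono) k)

theorem card_monotone_add_le (n c d : ℕ) :
    Nat.card {m : Fin (n + 1) → ℕ // Monotone m ∧ ∀ k, m k + d ≤ c} =
      (n + 1 + c - d).choose (n + 1) := by
  rcases le_or_gt d c with hdc | hcd
  · obtain ⟨M, rfl⟩ := Nat.exists_eq_add_of_le hdc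
    have hbound : ∀ m : Fin (n + 1) → ℕ,
        (Monotone m ∧ ∀ k, m k + d ≤ d + M) ↔ (Monotone m ∧ ∀ k, m k ≤ M) :=
      fun m => and_congr_right fun _ => forall_congr' fun k => by omega
    rw [Nat.card_congr ((Equiv.subtypeEquivRight hbound).trans (monotoneEquivOrderEmbedding n M)),
      Nat.card_fin_orderEmbedding_fin]
    congr 1
    omega
  · rw [Nat.choose_eq_zero_of_lt (by omega), Nat.card_eq_zero]
    exact Or.inl ⟨fun m => by have := m.2.2 0; omega⟩

theorem Fin.partialSum_last {M : Type*} [AddCommMonoid M] {n : ℕ} (f : Fin n → M) :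
    Fin.partialSum f (Fin.last n) = ∑ i, f i := by
  rw [Fin.partialSum, Fin.val_last, List.take_of_length_le (by simp), List.sum_ofFn]

section Gapped

variable {n : ℕ} (D : Fin (n + 1) → ℕ) (c : ℕ)

/-- `q` increases by at least `D k` from each index `k` to the next, where the successor of the
last index is the ceiling `c`. -/
def IsGapped (q : Fin (n + 1) → ℕ) : Prop :=
  (∀ i : Fin n, q i.castSucc + D i.castSucc ≤ q i.succ) ∧ q (Fin.last n) + D (Fin.last n) ≤ c

variable {D c}

theorem Fin.partialSum_succ_castSucc (i : Fin n) :
    Fin.partialSum D i.succ.castSucc = Fin.partialSum D i.castSucc.castSucc + D i.castSucc := by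
  rw [← Fin.succ_castSucc, Fin.partialSum_succ]

theorem Fin.sum_eq_partialSum_castSucc_last_add :
    ∑ j, D j = Fin.partialSum D (Fin.last n).castSucc + D (Fin.last n) := by
  rw [← Fin.partialSum_last, ← Fin.succ_last, Fin.partialSum_succ]

theorem IsGapped.partialSum_le {q : Fin (n + 1) → ℕ} (hq : IsGapped D c q) (k : Fin (n + 1)) :
    Fin.partialSum D k.castSucc ≤ q k := by
  induction k using Fin.induction with
  | zero => simp
  | succ i ih =>
    rw [Fin.partialSum_succ_castSucc]
    have := hq.1 i
    omega

variable (D c)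

def gappedEquivMonotone :
    {q // IsGapped D c q} ≃ {m : Fin (n + 1) → ℕ // Monotone m ∧ ∀ k, m k + ∑ j, D j ≤ c} where
  toFun q := ⟨fun k => q.1 k - Fin.partialSum D k.castSucc, by
    have hS := q.2.partialSum_le
    have hmono : Monotone fun k => q.1 k - Fin.partialSum D k.castSucc := by
      rw [Fin.monotone_iff_le_succ]
      intro i
      have := q.2.1 i
      have := hS i.castSucc
      rw [Fin.partialSum_succ_castSucc]
      omega
    refine ⟨hmono, fun k => ?_⟩
    have := hmono (Fin.le_last k)
    have := q.2.2
    have := hS (Fin.last n)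
    have := Fin.sum_eq_partialSum_castSucc_last_add (D := D)
    dsimp only at *
    omega⟩
  invFun m := ⟨fun k => m.1 k + Fin.partialSum D k.castSucc, by
    refine ⟨fun i => ?_, ?_⟩
    · have := m.2.1 i.castSucc_lt_succ.le
      have := Fin.partialSum_succ_castSucc (D := D) i
      dsimp only
      omega
    · have := m.2.2 (Fin.last n)
      have := Fin.sum_eq_partialSum_castSucc_last_add (D := D)
      dsimp only
      omega⟩
  left_inv q := Subtype.ext <| funext fun k => Nat.sub_add_cancel (q.2.partialSum_le k)
  right_inv m := Subtype.ext <| funext fun k => Nat.add_sub_cancel _ _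

end Gapped

theorem toLex_mul_add_lt_toLex_mul_add_iff {α : Type*} [LinearOrder α] {p q q' s s' : ℕ}
    {i i' : α} (hs : s < p) (hs' : s' < p) (hne : toLex (s, i) ≠ toLex (s', i')) :
    toLex (p * q + s, i) < toLex (p * q' + s', i') ↔
      q + (if toLex (s', i') < toLex (s, i) then 1 else 0) ≤ q' := by
  rcases lt_trichotomy q q' with h | rfl | h
  · have : p * q + s < p * q' + s' := by nlinarith
    exact ⟨fun _ => by split_ifs <;> omega, fun _ => Prod.Lex.toLex_lt_toLex.2 (Or.inl this)⟩
  · have hlex : toLex (p * q + s, i) < toLex (p * q + s', i') ↔ toLex (s, i) < toLex (s', i') := by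
      simp only [Prod.Lex.toLex_lt_toLex, add_lt_add_iff_left, add_right_inj]
    rw [hlex]
    split_ifs with hlt
    · simpa using hlt.le
    · simpa using lt_of_le_of_ne (not_lt.1 hlt) hne
  · have : p * q' + s' < p * q + s := by nlinarith
    refine ⟨fun hlt => absurd (Prod.Lex.toLex_lt_toLex.2 (Or.inl this)) (lt_asymm hlt), fun _ => ?_⟩
    split_ifs at * <;> omega

theorem mul_add_le_mul_iff {p q s c : ℕ} (hs : s < p) :
    p * q + s ≤ p * c ↔ q + (if s = 0 then 0 else 1) ≤ c := by
  split_ifs with h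
  · simp [h, Nat.mul_le_mul_left_iff (by omega : 0 < p)]
  · constructor
    · intro hle
      by_contra! hc
      have := Nat.mul_le_mul_left p (by omega : c ≤ q)
      omega
    · intro hle
      nlinarith

theorem card_filter_le_eq_iff_strictMono {α : Type*} [LinearOrder α] {m : ℕ} (F : Fin m → α)
    (π : Equiv.Perm (Fin m)) :
    (∀ i, #{j | F j ≤ F i} = (π i : ℕ) + 1) ↔ StrictMono fun k => F (π⁻¹ k) := by
  constructor
  · intro h a b hab
    by_contra! hba
    have hsub : #{j | F j ≤ F (π⁻¹ b)} ≤ #{j | F j ≤ F (π⁻¹ a)} :=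
      card_le_card fun j hj => by
        simp only [mem_filter, mem_univ, true_and] at hj ⊢
        exact hj.trans hba
    rw [h, h] at hsub
    simp only [Equiv.Perm.coe_inv, Equiv.apply_symm_apply, add_le_add_iff_right,
      Fin.val_fin_le] at hsub
    exact absurd hab (not_lt.2 hsub)
  · intro hF i
    have hle : ∀ j, F j ≤ F i ↔ π j ≤ π i := fun j => by
      simpa using hF.le_iff_le (a := π j) (b := π i)
    rw [filter_congr fun j _ => hle j, ← Fin.card_Iic]
    exact card_equiv π fun j => by simp

theorem rho_eq_val_neg {p : ℕ} [NeZero p] (r : ZMod p) : rho p r = (-r).val := by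
  rw [rho, ZMod.neg_val]

theorem rho_lt {p : ℕ} [NeZero p] (r : ZMod p) : rho p r < p := by
  rw [rho_eq_val_neg]
  exact ZMod.val_lt _

theorem rho_eq_zero_iff {p : ℕ} [NeZero p] {r : ZMod p} : rho p r = 0 ↔ r = 0 := by
  rw [rho_eq_val_neg, ZMod.val_eq_zero, neg_eq_zero]

theorem eq_mul_div_add_val_of_natCast_eq {p a : ℕ} {r : ZMod p} (h : (a : ZMod p) = r) :
    a = p * (a / p) + r.val := by
  rw [← h, ZMod.val_natCast, Nat.div_add_mod]

section Descents

variable {p n : ℕ}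

theorem GPN.inv_fst (σ : GPN p n) : (σ⁻¹).1 = σ.1⁻¹ := rfl

theorem GPN.inv_snd (σ : GPN p n) (k : Fin n) : (σ⁻¹).2 k = -σ.2 (σ.1⁻¹ k) := rfl

theorem GPN.rho_inv_snd [NeZero p] (σ : GPN p n) (k : Fin n) :
    rho p ((σ⁻¹).2 k) = (σ.2 (σ.1⁻¹ k)).val := by
  rw [rho_eq_val_neg, GPN.inv_snd, neg_neg]

theorem gpnHasDDescentAt_castSucc_iff (τ : GPN p (n + 1)) (i : Fin n) :
    gpnHasDDescentAt τ i.castSucc ↔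
      toLex (rho p (τ.2 i.succ), τ.1 i.succ) < toLex (rho p (τ.2 i.castSucc), τ.1 i.castSucc) := by
  rw [gpnHasDDescentAt, dif_pos (by simp), sigmaLt, Prod.Lex.toLex_lt_toLex]
  simp only [gpnPair, Fin.val_castSucc, Order.lt_add_one_iff, Order.add_one_le_iff,
    Fin.val_fin_lt]
  rfl

theorem gpnHasDDescentAt_last_iff (τ : GPN p (n + 1)) :
    gpnHasDDescentAt τ (Fin.last n) ↔ τ.2 (Fin.last n) ≠ 0 := by
  rw [gpnHasDDescentAt, dif_neg (by simp)]

def dDescentIndicator (τ : GPN p n) (k : Fin n) : ℕ := if gpnHasDDescentAt τ k then 1 else 0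

theorem dNum_eq_sum_dDescentIndicator (τ : GPN p n) : dNum τ = ∑ k, dDescentIndicator τ k :=
  card_filter _ _

end Descents

section Shuffle

variable {p n : ℕ}

theorem shuffleEq_iff {b : ℕ} (σ : GPN p n) (A : Fin n → Fin b) :
    shuffleEq p A σ ↔ (∀ i, ((A i : ℕ) : ZMod p) = σ.2 i) ∧
      StrictMono (fun k => toLex ((A (σ.1⁻¹ k) : ℕ), σ.1⁻¹ k)) := by
  have hpos : ∀ i, shufflePos A i = #{j | toLex ((A j : ℕ), j) ≤ toLex ((A i : ℕ), i)} :=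
    fun i => by simp only [shufflePos, Prod.Lex.toLex_le_toLex, Fin.val_fin_lt, Fin.val_inj]
  simp only [shuffleEq, shuffleCol, hpos, card_filter_le_eq_iff_strictMono, and_comm]

variable [NeZero p]

theorem isGapped_iff_strictMono (σ : GPN p (n + 1)) (c : ℕ) (q : Fin (n + 1) → ℕ) :
    IsGapped (dDescentIndicator σ⁻¹) c q ↔
      StrictMono (fun k => toLex (p * q k + rho p ((σ⁻¹).2 k), σ.1⁻¹ k)) ∧
        p * q (Fin.last n) + rho p ((σ⁻¹).2 (Fin.last n)) ≤ p * c := by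
  rw [IsGapped, Fin.strictMono_iff_lt_succ]
  refine and_congr (forall_congr' fun i => ?_) ?_
  · have hne : toLex (rho p ((σ⁻¹).2 i.castSucc), σ.1⁻¹ i.castSucc) ≠
        toLex (rho p ((σ⁻¹).2 i.succ), σ.1⁻¹ i.succ) := fun h =>
      i.castSucc_lt_succ.ne (σ.1⁻¹.injective (Prod.ext_iff.1 (toLex_inj.1 h)).2)
    rw [toLex_mul_add_lt_toLex_mul_add_iff (rho_lt _) (rho_lt _) hne]
    simp only [dDescentIndicator, gpnHasDDescentAt_castSucc_iff, GPN.inv_fst]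
  · rw [mul_add_le_mul_iff (rho_lt _)]
    simp only [dDescentIndicator, gpnHasDDescentAt_last_iff, rho_eq_zero_iff, ite_not]

def shuffleEquivGapped (σ : GPN p (n + 1)) (c : ℕ) :
    {A : Fin (n + 1) → Fin (p * c + 1) // shuffleEq p A σ} ≃
      {q // IsGapped (dDescentIndicator σ⁻¹) c q} where
  toFun A := ⟨fun k => A.1 (σ.1⁻¹ k) / p, by
    obtain ⟨hcol, hmono⟩ := (shuffleEq_iff σ A.1).1 A.2
    have hA : ∀ k, p * ((A.1 (σ.1⁻¹ k) : ℕ) / p) + rho p ((σ⁻¹).2 k) = A.1 (σ.1⁻¹ k) :=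
      fun k => by
        rw [GPN.rho_inv_snd]
        exact (eq_mul_div_add_val_of_natCast_eq (hcol _)).symm
    rw [isGapped_iff_strictMono]
    simp only [hA]
    exact ⟨hmono, Nat.lt_succ_iff.1 (A.1 _).isLt⟩⟩
  invFun q := ⟨fun i => ⟨p * q.1 (σ.1 i) + (σ.2 i).val, by
    obtain ⟨hmono, hlast⟩ := (isGapped_iff_strictMono σ c q.1).1 q.2
    have := Prod.Lex.monotone_fst _ _ (hmono.monotone (Fin.le_last (σ.1 i)))
    simp only [ofLex_toLex, GPN.rho_inv_snd, Equiv.Perm.coe_inv, Equiv.symm_apply_apply]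
      at this hlast
    omega⟩, by
    refine (shuffleEq_iff σ _).2 ⟨fun i => by simp, ?_⟩
    simpa [GPN.rho_inv_snd] using ((isGapped_iff_strictMono σ c q.1).1 q.2).1⟩
  left_inv A := by
    obtain ⟨hcol, -⟩ := (shuffleEq_iff σ A.1).1 A.2
    ext i
    simp only [Equiv.Perm.coe_inv, Equiv.symm_apply_apply]
    exact (eq_mul_div_add_val_of_natCast_eq (hcol i)).symm
  right_inv q := by
    ext k
    simp [Nat.mul_add_div (NeZero.pos p), Nat.div_eq_of_lt (ZMod.val_lt _)]

theorem card_filter_shuffleEq (σ : GPN p n) (c : ℕ) :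
    #{A : Fin n → Fin (p * c + 1) | shuffleEq p A σ} = (n + c - dNum σ⁻¹).choose n := by
  cases n with
  | zero => simp [shuffleEq, dNum]
  | succ n =>
    rw [← Fintype.card_subtype, ← Nat.card_eq_fintype_card,
      Nat.card_congr ((shuffleEquivGapped σ c).trans (gappedEquivMonotone _ c)),
      card_monotone_add_le, dNum_eq_sum_dDescentIndicator]

end Shuffle

theorem statement16_general (p c n : ℕ) [NeZero p]
    (b : ℕ) (hb : b = p * c + 1) (σ : GPN p n) :
    shuffleProb p n b σ = ((b : ℝ) ^ n)⁻¹ * ((n + c - dNum σ⁻¹).choose n : ℝ) := by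
  subst hb
  rw [shuffleProb, card_filter_shuffleEq, div_eq_inv_mul]

/-- **Lemma.** For `b = pc + 1`, the probability that the `(b,n,p)`-shuffle equals a given
`σ ∈ G_{p,n}` is `b⁻ⁿ · binom(n + c - d(σ⁻¹), n)`. -/
theorem statement16 (p c n : ℕ) [NeZero p] (hc : 1 ≤ c) (hn : 1 ≤ n)
    (b : ℕ) (hb : b = p * c + 1) (σ : GPN p n) :
    shuffleProb p n b σ = ((b : ℝ) ^ n)⁻¹ * ((n + c - dNum σ⁻¹).choose n : ℝ) :=
  statement16_general p c n b hb σ
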